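/- In the graph G*_f of the IP reduction, every directed path from s_i to t_i within a variable gadget has exactly 6 edges, and the maximum possible interestingness score of any directed path in G*_f is W = log₂(6!) + 29m·log₂(7), attained exactly by 6-edge paths whose last edge is a type-T edge of weight 29m. -/

import Mathlib

/-- Vertices of the graph G*_f of the IP reduction, for a 3-SAT formula with
n variables and m clauses: sources s_i, terminals t_i, subdivision vertices
t_{i,j,1}, t_{i,j,2} (`sub i j 0/1`), the vertices v_{i,j}, y_{i,j}, ȳ_{i,j}
(`yb`), u_{i,j} of the variable gadgets, and the clause vertices z_{j,0..2}. -/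
inductive GVtx (n m : ℕ)
  | s (i : Fin n)
  | t (i : Fin n)
  | sub (i : Fin n) (j : Fin m) (p : Fin 2)
  | v (i : Fin n) (j : Fin m)
  | y (i : Fin n) (j : Fin m)
  | yb (i : Fin n) (j : Fin m)
  | u (i : Fin n) (j : Fin m)
  | z (j : Fin m) (p : Fin 3)

/-- The set of (indices of) clauses in which variable `i` occurs.
A clause is a finite set of literals (variable, sign). -/
def occ {n m : ℕ} (C : Fin m → Finset (Fin n × Bool)) (i : Fin n) :
    Finset (Fin m) :=
  Finset.univ.filter (fun j => (i, true) ∈ C j ∨ (i, false) ∈ C j)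

/-- Cyclic successor of the occurrence index `j` among the clauses containing
variable `i`: the smallest occurrence index larger than `j`, or, if none exists,
the smallest occurrence index overall (α_{ℓ_i + 1} = α_1). -/
def nxt {n m : ℕ} (C : Fin m → Finset (Fin n × Bool)) (i : Fin n) (j : Fin m) :
    Fin m :=
  WithTop.untopD (WithTop.untopD j (occ C i).min) ((occ C i).filter (fun j' => j < j')).min

/-- Edge weights of G*_f: `ew C a b = 0` when (a, b) is not an edge; every edge
has weight 1 except the type-T edges (u_{i,j}, t_i), which have weight 29m. -/
def ew {n m : ℕ} (C : Fin m → Finset (Fin n × Bool)) :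
    GVtx n m → GVtx n m → ℕ
  | .s i, .sub i' j p => if i = i' ∧ j ∈ occ C i ∧ p = 0 then 1 else 0
  | .sub i j p, .sub i' j' p' =>
      if i = i' ∧ j = j' ∧ j ∈ occ C i ∧ p = 0 ∧ p' = 1 then 1 else 0
  | .sub i j p, .v i' j' => if i = i' ∧ j = j' ∧ j ∈ occ C i ∧ p = 1 then 1 else 0
  | .v i j, .y i' j' => if i = i' ∧ j = j' ∧ j ∈ occ C i then 1 else 0
  | .v i j, .yb i' j' => if i = i' ∧ j = j' ∧ j ∈ occ C i then 1 else 0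
  | .y i j, .u i' j' => if i = i' ∧ j = j' ∧ j ∈ occ C i then 1 else 0
  | .yb i j, .u i' j' => if i = i' ∧ j ∈ occ C i ∧ j' = nxt C i j then 1 else 0
  | .u i j, .t i' => if i = i' ∧ j ∈ occ C i then 29 * m else 0
  | .z j p, .z j' p' =>
      if j = j' ∧ ((p = 0 ∧ p' = 1) ∨ (p = 1 ∧ p' = 2)) then 1 else 0
  | .z j p, .y i j' => if j = j' ∧ p = 2 ∧ (i, true) ∈ C j then 1 else 0
  | .z j p, .yb i j' => if j = j' ∧ p = 2 ∧ (i, false) ∈ C j then 1 else 0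
  | _, _ => 0

/-- A directed path in G*_f, given as its list of edges. -/
def GPath {n m : ℕ} (C : Fin m → Finset (Fin n × Bool))
    (p : List (GVtx n m × GVtx n m)) : Prop :=
  (∀ e ∈ p, 0 < ew C e.1 e.2) ∧ p.Chain' (fun e f => e.2 = f.1)

/-- The interestingness score of a path of G*_f. -/
noncomputable def gScore {n m : ℕ} (C : Fin m → Finset (Fin n × Bool))
    (p : List (GVtx n m × GVtx n m)) : ℝ :=
  ∑ i : Fin p.length, (ew C (p.get i).1 (p.get i).2 : ℝ) * Real.logb 2 (i.1 + 2)

/-! Grading the vertices by `GVtx.level` (s ↦ 0, subdivision and clause vertices ↦ 1, 2,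
v ↦ 3, y and ȳ ↦ 4, u ↦ 5, t ↦ 6), every edge of G*_f raises the level by exactly one. Hence a
path has at most 6 edges, and an s_i–t_i path exactly 6. Terminals have no out-edges, and the
only edges into them are the type-T edges, so all edges of a path but the last have weight 1:
a path with k + 1 edges scores log₂((k + 1)!) + w · log₂(k + 2) with w ∈ {1, 29m}, which is
largest, namely W, exactly when k = 5 and w = 29m. -/

open Real Nat

lemma Fin.sum_univ_get_append_singleton {α M : Type*} [AddCommMonoid M] (f : ℕ → α → M)
    (l : List α) (a : α) :
    ∑ k : Fin (l ++ [a]).length, f k ((l ++ [a]).get k) =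
      ∑ k : Fin l.length, f k (l.get k) + f l.length a := by
  rw [← Fin.sum_congr' _ (by simp : l.length + 1 = (l ++ [a]).length), Fin.sum_univ_castSucc]
  simp

lemma sum_range_logb_add_two (b : ℝ) (n : ℕ) :
    ∑ k ∈ Finset.range n, logb b (k + 2) = logb b (n + 1)! := by
  induction n with
  | zero => simp
  | succ n ih =>
    rw [Finset.sum_range_succ, ih, Nat.factorial_succ (n + 1), Nat.cast_mul,
      logb_mul (by positivity) (by positivity)]
    push_cast
    ring_nf

lemma logb_factorial_add_mul_logb_le {k : ℕ} {w M : ℝ} (hk : k ≤ 5) (hw : w = 1 ∨ w = M)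
    (hM : 1 < M) :
    logb 2 (k + 1)! + w * logb 2 (k + 2) ≤ logb 2 720 + M * logb 2 7 ∧
      (logb 2 (k + 1)! + w * logb 2 (k + 2) = logb 2 720 + M * logb 2 7 ↔ k = 5 ∧ w = M) := by
  have hk' : (k : ℝ) + 2 ≤ 7 := by exact_mod_cast (by omega : k + 2 ≤ 7)
  have hfac : logb 2 (k + 1)! ≤ logb 2 720 := by
    refine logb_le_logb_of_le one_lt_two (by positivity) ?_
    exact_mod_cast (Nat.factorial_le (by omega : k + 1 ≤ 6)).trans_eq rfl
  have hlog_pos : 0 < logb 2 (k + 2) :=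
    logb_pos one_lt_two (by linarith [k.cast_nonneg (α := ℝ)])
  have hlog : logb 2 (k + 2) ≤ logb 2 7 := logb_le_logb_of_le one_lt_two (by positivity) hk'
  have hwM : w ≤ M := by rcases hw with rfl | rfl <;> linarith
  have htail : w * logb 2 (k + 2) ≤ M * logb 2 7 :=
    mul_le_mul hwM hlog hlog_pos.le (by linarith)
  refine ⟨add_le_add hfac htail, fun heq => ?_, ?_⟩
  · rcases hw with rfl | rfl
    · nlinarith
    · refine ⟨?_, rfl⟩
      by_contra hk5
      have : logb 2 (k + 2) < logb 2 7 :=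
        logb_lt_logb one_lt_two (by positivity) (by exact_mod_cast (by omega : k + 2 < 7))
      nlinarith
  · rintro ⟨rfl, rfl⟩
    norm_num [Nat.factorial]

namespace GVtx

variable {n m : ℕ}

def level : GVtx n m → ℕ
  | s _ => 0
  | sub _ _ p => 1 + p
  | z _ p => 1 + p
  | v _ _ => 3
  | y _ _ | yb _ _ => 4
  | u _ _ => 5
  | t _ => 6

lemma level_le_six (a : GVtx n m) : a.level ≤ 6 := by
  cases a <;> simp only [level] <;> omega

end GVtx

section Edges

variable {n m : ℕ} {C : Fin m → Finset (Fin n × Bool)} {a b : GVtx n m}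

lemma level_snd_of_ew_pos (h : 0 < ew C a b) : b.level = a.level + 1 := by
  cases a <;> cases b <;> simp only [ew] at h <;> (try split_ifs at h) <;>
    grind [GVtx.level]

lemma ew_t_eq_zero (i : Fin n) (b : GVtx n m) : ew C (.t i) b = 0 := by
  cases b <;> rfl

lemma ew_eq_one_or_typeT (h : 0 < ew C a b) :
    ew C a b = 1 ∨ (∃ i j, a = .u i j ∧ b = .t i) ∧ ew C a b = 29 * m := by
  cases a <;> cases b <;> simp only [ew] at h ⊢ <;> (try split_ifs at h ⊢) <;> simp_all

lemma ew_eq_typeT_iff (h : 0 < ew C a b) :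
    ew C a b = 29 * m ↔ ∃ i j, a = .u i j ∧ b = .t i := by
  rcases ew_eq_one_or_typeT h with h1 | ⟨hT, h29⟩
  · refine iff_of_false (by omega) ?_
    rintro ⟨i, j, rfl, rfl⟩
    simp only [ew] at h1
    split_ifs at h1
    omega
  · exact iff_of_true h29 hT

end Edges

namespace GPath

variable {n m : ℕ} {C : Fin m → Finset (Fin n × Bool)} {e : GVtx n m × GVtx n m}
  {p : List (GVtx n m × GVtx n m)}

lemma of_cons (hp : GPath C (e :: p)) : GPath C p :=
  ⟨fun f hf => hp.1 f (List.mem_cons_of_mem e hf), (List.isChain_cons.mp hp.2).2⟩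

lemma level_getLast (hp : GPath C (e :: p)) :
    ((e :: p).getLast (List.cons_ne_nil e p)).2.level = e.1.level + p.length + 1 := by
  induction p generalizing e with
  | nil => exact level_snd_of_ew_pos (hp.1 e List.mem_cons_self)
  | cons f p ih =>
    have hef : e.2 = f.1 := List.isChain_cons_cons.mp hp.2 |>.1
    have he := level_snd_of_ew_pos (hp.1 e List.mem_cons_self)
    rw [List.getLast_cons_cons, ih hp.of_cons, ← hef, he, List.length_cons]
    ring

lemma length_le_six (hp : GPath C p) : p.length ≤ 6 := by
  cases p with
  | nil => simp
  | cons e p =>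
    have := hp.level_getLast
    have := GVtx.level_le_six ((e :: p).getLast (List.cons_ne_nil e p)).2
    simp only [List.length_cons]
    omega

lemma length_eq_six_of_s_to_t (hp : GPath C p) (hne : p ≠ []) {i i' : Fin n}
    (hs : p.head?.map Prod.fst = some (.s i)) (ht : p.getLast?.map Prod.snd = some (.t i')) :
    p.length = 6 := by
  obtain ⟨e, q, rfl⟩ := List.exists_cons_of_ne_nil hne
  rw [List.getLast?_eq_getLast_of_ne_nil hne, Option.map_some, Option.some_inj] at ht
  simp only [List.head?_cons, Option.map_some, Option.some_inj] at hs
  have := hp.level_getLast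
  rw [ht, hs] at this
  simp only [GVtx.level, List.length_cons] at this ⊢
  omega

lemma ew_eq_one_of_mem_init (hp : GPath C (p ++ [e])) {f : GVtx n m × GVtx n m} (hf : f ∈ p) :
    ew C f.1 f.2 = 1 := by
  obtain ⟨k, hk, rfl⟩ := List.getElem_of_mem hf
  have hlen : k + 1 < (p ++ [e]).length := by simp; omega
  have hnext : p[k].2 = (p ++ [e])[k + 1].1 := by
    simpa [List.getElem_append_left hk] using List.isChain_iff_getElem.mp hp.2 k hlen
  rcases ew_eq_one_or_typeT (hp.1 _ (List.mem_append_left _ hf)) with h | ⟨⟨i, j, -, ht⟩, -⟩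
  · exact h
  · have := hp.1 _ (List.getElem_mem hlen)
    rw [← hnext, ht, ew_t_eq_zero] at this
    exact absurd this (lt_irrefl 0)

end GPath

section Score

variable {n m : ℕ} {C : Fin m → Finset (Fin n × Bool)}

lemma gScore_append_singleton (p : List (GVtx n m × GVtx n m)) (e : GVtx n m × GVtx n m) :
    gScore C (p ++ [e]) = gScore C p + ew C e.1 e.2 * logb 2 (p.length + 2) := by
  unfold gScore
  exact Fin.sum_univ_get_append_singleton (fun k e => (ew C e.1 e.2 : ℝ) * logb 2 (k + 2)) p e

lemma gScore_of_forall_ew_eq_one {p : List (GVtx n m × GVtx n m)}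
    (hp : ∀ e ∈ p, ew C e.1 e.2 = 1) : gScore C p = logb 2 (p.length + 1)! := by
  rw [gScore, ← sum_range_logb_add_two, ← Fin.sum_univ_eq_sum_range]
  refine Finset.sum_congr rfl fun k _ => ?_
  rw [hp _ (List.get_mem p k), Nat.cast_one, one_mul]

end Score

theorem stmt_16_general {n m : ℕ} (hm : 0 < m) (C : Fin m → Finset (Fin n × Bool)) :
    (∀ i : Fin n, ∀ p : List (GVtx n m × GVtx n m), GPath C p → p ≠ [] →
        p.head?.map Prod.fst = some (GVtx.s i) →
        p.getLast?.map Prod.snd = some (GVtx.t i) →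
        p.length = 6) ∧
    (∀ p : List (GVtx n m × GVtx n m), GPath C p →
        gScore C p ≤ Real.logb 2 720 + 29 * m * Real.logb 2 7 ∧
        (gScore C p = Real.logb 2 720 + 29 * m * Real.logb 2 7 ↔
          p.length = 6 ∧ ∃ i j, p.getLast? = some (GVtx.u i j, GVtx.t i))) := by
  refine ⟨fun i p hp hne hs ht => hp.length_eq_six_of_s_to_t hne hs ht, fun p hp => ?_⟩
  obtain rfl | ⟨q, e, rfl⟩ := List.eq_nil_or_concat' p
  · have : 0 < logb 2 720 + 29 * m * logb 2 7 := by
      have := logb_pos one_lt_two (by norm_num : (1 : ℝ) < 720)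
      have := logb_pos one_lt_two (by norm_num : (1 : ℝ) < 7)
      positivity
    simp [gScore, this.le, this.ne]
  have hlen : q.length ≤ 5 := by simpa [Nat.lt_succ_iff] using hp.length_le_six
  have he := hp.1 e (by simp)
  have hw : (ew C e.1 e.2 : ℝ) = 1 ∨ (ew C e.1 e.2 : ℝ) = 29 * m := by
    rcases ew_eq_one_or_typeT he with h | ⟨-, h⟩ <;> simp [h]
  rw [gScore_append_singleton,
    gScore_of_forall_ew_eq_one fun f hf => hp.ew_eq_one_of_mem_init hf]
  obtain ⟨hle, hiff⟩ := logb_factorial_add_mul_logb_le hlen hw (by norm_cast; omega)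
  refine ⟨hle, hiff.trans ?_⟩
  simp only [List.getLast?_concat, List.length_append, List.length_singleton, Option.some_inj,
    Prod.ext_iff]
  exact and_congr (by omega) (by exact_mod_cast ew_eq_typeT_iff he)

/-- in G*_f (each clause having exactly three literals over three
distinct variables), every directed path from s_i to t_i has exactly 6 edges,
and the maximum possible score of any directed path is W = log₂(6!) + 29m·log₂7,
attained exactly by 6-edge paths whose last edge is a type-T edge (u_{i,j}, t_i)
of weight 29m. -/
theorem stmt_16 {n m : ℕ} (hm : 0 < m) (C : Fin m → Finset (Fin n × Bool))
    (hcard : ∀ j, (C j).card = 3)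
    (hvars : ∀ j, ((C j).image Prod.fst).card = 3) :
    (∀ i : Fin n, ∀ p : List (GVtx n m × GVtx n m), GPath C p → p ≠ [] →
        p.head?.map Prod.fst = some (GVtx.s i) →
        p.getLast?.map Prod.snd = some (GVtx.t i) →
        p.length = 6) ∧
    (∀ p : List (GVtx n m × GVtx n m), GPath C p →
        gScore C p ≤ Real.logb 2 720 + 29 * m * Real.logb 2 7 ∧
        (gScore C p = Real.logb 2 720 + 29 * m * Real.logb 2 7 ↔
          p.length = 6 ∧ ∃ i j, p.getLast? = some (GVtx.u i j, GVtx.t i))) :=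
  stmt_16_general hm C
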